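/- L² bound for the cell averages in the resonator strip. Let 0 ≤ c < d ≤ a be fixed and let Y_V := (0,1)×(L, L+V). Suppose the functions u^{ε_n} are C¹ on a neighborhood of the closure of Ω_{ε_n}, satisfy the uniform bound ∫_{Ω_{ε_n}} (|u^{ε_n}|² + |∇u^{ε_n}|²) ≤ M for all n, and that the strip averages v^{ε}(x₁) := (1/(εV)) ∫_{εL}^{ε(L+V)} u^{ε}(x₁,x₂) dx₂ are uniformly bounded in L²(I): ∫_0^a |v^{ε_n}|² ≤ M' for all n. Define U^{ε}(y₁,y₂) := (1/|K_ε|) Σ_{k ∈ K_ε} u^{ε}(ε(k+y₁), ε y₂) for (y₁,y₂) ∈ Y_V. Then the restrictions U^{ε_n}|_{Y_V} are uniformly bounded in L²(Y_V): there is a constant C, depending only on a, L, V, c, d, M and M', with ∫_{Y_V} |U^{ε_n}(y)|² dy ≤ C for all n. -/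

import Mathlib

open MeasureTheory Set Filter Topology

noncomputable section

/-- First partial derivative `∂₁u`. -/
def pd1 (u : ℝ × ℝ → ℝ) (x : ℝ × ℝ) : ℝ := fderiv ℝ u x (1, 0)

/-- Second partial derivative `∂₂u`. -/
def pd2 (u : ℝ × ℝ → ℝ) (x : ℝ × ℝ) : ℝ := fderiv ℝ u x (0, 1)

/-- The gradient `∇u` as a pair. -/
def grad (u : ℝ × ℝ → ℝ) (x : ℝ × ℝ) : ℝ × ℝ := (pd1 u x, pd2 u x)

/-- Euclidean scalar product on `ℝ²`. -/
def dot (p q : ℝ × ℝ) : ℝ := p.1 * q.1 + p.2 * q.2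

/-- The limit domain `Ω₀ = (0,a) × (−b,0)`. -/
def Omega0 (a b : ℝ) : Set (ℝ × ℝ) := Ioo 0 a ×ˢ Ioo (-b) 0

/-- The resonator strip `S_ε = (0,a) × (Lε, (L+V)ε)`. -/
def Strip (a L V ε : ℝ) : Set (ℝ × ℝ) := Ioo 0 a ×ˢ Ioo (L * ε) ((L + V) * ε)

/-- The channels `C_ε = ⋃_{k=0}^{a/ε−1} (kε, kε+αε³) × [0, Lε]`. -/
def Channels (a L α ε : ℝ) : Set (ℝ × ℝ) :=
  ⋃ k ∈ Finset.range ⌊a / ε⌋₊,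
    Ioo ((k : ℝ) * ε) ((k : ℝ) * ε + α * ε ^ 3) ×ˢ Icc 0 (L * ε)

/-- The perforated domain `Ω_ε = Ω₀ ∪ S_ε ∪ C_ε`. -/
def OmegaEps (a b L V α ε : ℝ) : Set (ℝ × ℝ) :=
  Omega0 a b ∪ Strip a L V ε ∪ Channels a L α ε

/-- `u` is C¹ on an open neighborhood of the closure of `s`. -/
def C1Nhd (u : ℝ × ℝ → ℝ) (s : Set (ℝ × ℝ)) : Prop :=
  ∃ U : Set (ℝ × ℝ), IsOpen U ∧ closure s ⊆ U ∧ ContDiffOn ℝ 1 u U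

/-- `ε` is an admissible parameter: `ε > 0` and `a/ε ∈ ℕ`. -/
def Admissible (a ε : ℝ) : Prop := 0 < ε ∧ ∃ N : ℕ, a = (N : ℝ) * ε

/-- Weak solution of the Helmholtz problem `−Δu − ω²u = f` in `Ω_ε` with
homogeneous Neumann boundary conditions. -/
def IsHelmholtzSol (a b L V α ω ε : ℝ) (f u : ℝ × ℝ → ℝ) : Prop :=
  C1Nhd u (OmegaEps a b L V α ε) ∧
  ∀ φ : ℝ × ℝ → ℝ, ContDiff ℝ 1 φ → HasCompactSupport φ →
    (∫ x in OmegaEps a b L V α ε, dot (grad u x) (grad φ x))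
      - ω ^ 2 * ∫ x in OmegaEps a b L V α ε, u x * φ x
      = ∫ x in OmegaEps a b L V α ε, f x * φ x

/-- Vertical average of `u` over the resonator strip. -/
def vEps (L V ε : ℝ) (u : ℝ × ℝ → ℝ) (x₁ : ℝ) : ℝ :=
  (1 / (ε * V)) * ∫ x₂ in (ε * L)..(ε * (L + V)), u (x₁, x₂)

/-- Corrector `w^ε = (u^ε − u)/ε`. -/
def wEps (ε : ℝ) (uε u : ℝ × ℝ → ℝ) : ℝ × ℝ → ℝ := fun x => (uε x - u x) / ε

open Classical in
/-- Index set `K_ε = { k ∈ ℕ : kε ∈ [0, a−ε] and (kε, kε+ε) ∩ [c,d] ≠ ∅ }`. -/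
def Kset (a c d ε : ℝ) : Finset ℕ :=
  (Finset.range (⌊a / ε⌋₊ + 1)).filter fun k =>
    (k : ℝ) * ε ∈ Icc 0 (a - ε) ∧
      (Ioo ((k : ℝ) * ε) ((k : ℝ) * ε + ε) ∩ Icc c d).Nonempty

/-- Cell average `U^ε(y) = (1/|K_ε|) Σ_{k ∈ K_ε} u^ε(ε(k+y₁), ε y₂)`. -/
def Uav (a c d ε : ℝ) (uε : ℝ × ℝ → ℝ) (y : ℝ × ℝ) : ℝ :=
  (1 / ((Kset a c d ε).card : ℝ)) *
    ∑ k ∈ Kset a c d ε, uε (ε * ((k : ℝ) + y.1), ε * y.2)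

/-- The lower bulk part `Y_U = (0,1) × (−1,0)` of the unit cell. -/
def Ybelow : Set (ℝ × ℝ) := Ioo (0:ℝ) 1 ×ˢ Ioo (-1:ℝ) 0

/-- The upper bulk part `Y_V = (0,1) × (L, L+V)` of the unit cell. -/
def Yabove (L V : ℝ) : Set (ℝ × ℝ) := Ioo (0:ℝ) 1 ×ˢ Ioo L (L + V)


/-!
Rescaling the cell `ε(k + Y_V)` onto `Y_V` costs a factor `ε⁻²`, and the cells indexed by `K_ε`
are disjoint subsets of the strip `S_ε`; with Jensen's inequality for the average over `K_ε` this
gives `‖U^ε‖²_{L²(Y_V)} ≤ ‖u^ε‖²_{L²(S_ε)} / (|K_ε| ε²)`. On every vertical segment of `S_ε`,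
of length `εV`, the one-dimensional Poincaré inequality around the mean `v^ε(x₁)` yields
`‖u^ε‖²_{L²(S_ε)} ≤ 2εV ‖v^ε‖²_{L²(I)} + 2(εV)² ‖∂₂u^ε‖²_{L²(S_ε)} ≤ 2εV M' + 2(εV)² M`.
Finally `3 |K_ε| ε ≥ d - c` as soon as `K_ε ≠ ∅`, so the bound `6VM'/(d - c) + 2V²M` holds
for every admissible `ε`.
-/

theorem sq_integral_le_measureReal_univ_mul {α : Type*} [MeasurableSpace α] {μ : Measure α}
    [IsFiniteMeasure μ] {f : α → ℝ} (hf : Integrable f μ) (hf2 : Integrable (fun x => f x ^ 2) μ) :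
    (∫ x, f x ∂μ) ^ 2 ≤ μ.real univ * ∫ x, f x ^ 2 ∂μ := by
  have hquad : ∀ t : ℝ,
      0 ≤ μ.real univ * (t * t) + (-2 * ∫ x, f x ∂μ) * t + ∫ x, f x ^ 2 ∂μ := fun t => by
    have hlin : Integrable (fun x => f x ^ 2 - 2 * t * f x) μ := hf2.sub (hf.const_mul _)
    have hexpand : ∫ x, (f x - t) ^ 2 ∂μ
        = ∫ x, f x ^ 2 ∂μ - 2 * t * ∫ x, f x ∂μ + μ.real univ * (t * t) := by
      calc ∫ x, (f x - t) ^ 2 ∂μ = ∫ x, (f x ^ 2 - 2 * t * f x) + t * t ∂μ := by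
            congr 1; ext x; ring
        _ = _ := by
          rw [integral_add hlin (integrable_const _), integral_sub hf2 (hf.const_mul _),
            integral_const_mul, integral_const, smul_eq_mul]
    have hnonneg : 0 ≤ ∫ x, (f x - t) ^ 2 ∂μ := integral_nonneg fun x => sq_nonneg _
    linarith
  have := discrim_le_zero hquad
  rw [discrim] at this
  linarith

theorem sq_intervalIntegral_le {f : ℝ → ℝ} {p q : ℝ} (hpq : p ≤ q)
    (hf : ContinuousOn f (Icc p q)) :
    (∫ s in p..q, f s) ^ 2 ≤ (q - p) * ∫ s in p..q, f s ^ 2 := by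
  have : IsFiniteMeasure (volume.restrict (Ioc p q)) :=
    isFiniteMeasure_restrict.2 measure_Ioc_lt_top.ne
  simpa [intervalIntegral.integral_of_le hpq, Real.volume_real_Ioc_of_le hpq] using
    sq_integral_le_measureReal_univ_mul
      ((hf.integrableOn_Icc (μ := volume)).mono_set Ioc_subset_Icc_self)
      (((hf.pow 2).integrableOn_Icc (μ := volume)).mono_set Ioc_subset_Icc_self)

theorem abs_sub_le_integral_abs_deriv {g g' : ℝ → ℝ} {p q x t : ℝ}
    (hg : ∀ s ∈ Icc p q, HasDerivAt g (g' s) s) (hg' : ContinuousOn g' (Icc p q))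
    (hx : x ∈ Icc p q) (ht : t ∈ Icc p q) :
    |g x - g t| ≤ ∫ s in p..q, |g' s| := by
  have hpq : p ≤ q := ht.1.trans ht.2
  have hsub : uIcc t x ⊆ Icc p q := uIcc_subset_Icc ht hx
  rw [← intervalIntegral.integral_eq_sub_of_hasDerivAt (fun s hs => hg s (hsub hs))
    ((hg'.mono hsub).intervalIntegrable)]
  calc |∫ s in t..x, g' s| ≤ |(∫ s in t..x, |g' s|)| := by
        simpa only [Real.norm_eq_abs] using
          intervalIntegral.norm_integral_le_abs_integral_norm (f := g') (μ := volume)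
    _ ≤ |(∫ s in p..q, |g' s|)| :=
        intervalIntegral.abs_integral_mono_interval
          (uIoc_subset_uIoc_of_uIcc_subset_uIcc (by rwa [uIcc_of_le hpq]))
          (Filter.Eventually.of_forall fun s => abs_nonneg _)
          (hg'.abs.mono (uIcc_of_le hpq).subset).intervalIntegrable
    _ = ∫ s in p..q, |g' s| :=
        abs_of_nonneg (intervalIntegral.integral_nonneg hpq fun s _ => abs_nonneg _)

theorem sq_sub_intervalAverage_le {g g' : ℝ → ℝ} {p q x : ℝ} (hpq : p < q)
    (hg : ∀ s ∈ Icc p q, HasDerivAt g (g' s) s) (hg' : ContinuousOn g' (Icc p q))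
    (hx : x ∈ Icc p q) :
    (g x - ⨍ s in p..q, g s) ^ 2 ≤ (q - p) * ∫ s in p..q, g' s ^ 2 := by
  have hgc : ContinuousOn g (Icc p q) := fun s hs => (hg s hs).continuousAt.continuousWithinAt
  obtain ⟨t, ht, hgt⟩ := exists_eq_interval_average hpq.ne (by rwa [uIcc_of_le hpq.le])
  rw [uIoo_of_le hpq.le] at ht
  rw [← hgt, ← sq_abs]
  calc |g x - g t| ^ 2 ≤ (∫ s in p..q, |g' s|) ^ 2 :=
        pow_le_pow_left₀ (abs_nonneg _)
          (abs_sub_le_integral_abs_deriv hg hg' hx (Ioo_subset_Icc_self ht)) 2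
    _ ≤ (q - p) * ∫ s in p..q, |g' s| ^ 2 := sq_intervalIntegral_le hpq.le hg'.abs
    _ = (q - p) * ∫ s in p..q, g' s ^ 2 := by simp_rw [sq_abs]

theorem intervalIntegral_sq_le_of_hasDerivAt {g g' : ℝ → ℝ} {p q : ℝ} (hpq : p < q)
    (hg : ∀ s ∈ Icc p q, HasDerivAt g (g' s) s) (hg' : ContinuousOn g' (Icc p q)) :
    ∫ s in p..q, g s ^ 2 ≤
      2 * (q - p) * (⨍ s in p..q, g s) ^ 2 + 2 * (q - p) ^ 2 * ∫ s in p..q, g' s ^ 2 := by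
  have hgc : ContinuousOn g (Icc p q) := fun s hs => (hg s hs).continuousAt.continuousWithinAt
  set m := ⨍ s in p..q, g s
  set B := ∫ s in p..q, g' s ^ 2
  have hpointwise : ∀ x ∈ Icc p q, g x ^ 2 ≤ 2 * m ^ 2 + 2 * ((q - p) * B) := fun x hx => by
    nlinarith [sq_sub_intervalAverage_le hpq hg hg' hx, sq_nonneg (g x - 2 * m)]
  calc ∫ s in p..q, g s ^ 2 ≤ ∫ _ in p..q, 2 * m ^ 2 + 2 * ((q - p) * B) :=
        intervalIntegral.integral_mono_on hpq.le
          ((hgc.pow 2).mono (uIcc_of_le hpq.le).subset).intervalIntegrable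
          intervalIntegrable_const hpointwise
    _ = 2 * (q - p) * m ^ 2 + 2 * (q - p) ^ 2 * B := by
        rw [intervalIntegral.integral_const, smul_eq_mul]; ring

theorem setIntegral_sq_le_of_hasDerivAt_snd {u w : ℝ × ℝ → ℝ} {a₀ a₁ p q : ℝ} (ha : a₀ ≤ a₁)
    (hpq : p < q) (hu : ContinuousOn u (Icc a₀ a₁ ×ˢ Icc p q))
    (hw : ContinuousOn w (Icc a₀ a₁ ×ˢ Icc p q))
    (hderiv : ∀ x ∈ Icc a₀ a₁ ×ˢ Icc p q, HasDerivAt (fun s => u (x.1, s)) (w x) x.2) :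
    ∫ x in Ioo a₀ a₁ ×ˢ Ioo p q, u x ^ 2 ≤
      2 * (q - p) * (∫ x₁ in a₀..a₁, (⨍ x₂ in p..q, u (x₁, x₂)) ^ 2)
        + 2 * (q - p) ^ 2 * ∫ x in Ioo a₀ a₁ ×ˢ Ioo p q, w x ^ 2 := by
  have hqp : 0 < q - p := sub_pos.2 hpq
  have hintOn : ∀ {f : ℝ × ℝ → ℝ}, ContinuousOn f (Icc a₀ a₁ ×ˢ Icc p q) →
      IntegrableOn f (Ioo a₀ a₁ ×ˢ Ioo p q) (volume.prod volume) := fun hf =>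
    (hf.integrableOn_compact (isCompact_Icc.prod isCompact_Icc)).mono_set
      (prod_mono Ioo_subset_Icc_self Ioo_subset_Icc_self)
  have hint : ∀ {f : ℝ × ℝ → ℝ}, ContinuousOn f (Icc a₀ a₁ ×ˢ Icc p q) →
      Integrable f ((volume.restrict (Ioo a₀ a₁)).prod (volume.restrict (Ioo p q))) := by
    intro f hf
    rw [Measure.prod_restrict]
    exact hintOn hf
  have hIoo : ∀ f : ℝ → ℝ, ∫ s in p..q, f s = ∫ s in Ioo p q, f s := fun f => by
    rw [intervalIntegral.integral_of_le hpq.le, integral_Ioc_eq_integral_Ioo]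
  have havg : ∀ x₁, ⨍ x₂ in p..q, u (x₁, x₂) = (q - p)⁻¹ * ∫ x₂ in Ioo p q, u (x₁, x₂) :=
    fun x₁ => by rw [interval_average_eq, smul_eq_mul, hIoo]
  have hmem : ∀ x₁ ∈ Ioo a₀ a₁, ∀ s ∈ Icc p q, (x₁, s) ∈ Icc a₀ a₁ ×ˢ Icc p q :=
    fun x₁ hx₁ s hs => ⟨Ioo_subset_Icc_self hx₁, hs⟩
  have hslice : ∀ x₁ ∈ Ioo a₀ a₁, ∫ x₂ in Ioo p q, u (x₁, x₂) ^ 2 ≤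
      2 * (q - p) * (⨍ x₂ in p..q, u (x₁, x₂)) ^ 2
        + 2 * (q - p) ^ 2 * ∫ x₂ in Ioo p q, w (x₁, x₂) ^ 2 := fun x₁ hx₁ => by
    simpa only [hIoo, Function.comp_def] using intervalIntegral_sq_le_of_hasDerivAt hpq
      (fun s hs => hderiv (x₁, s) (hmem x₁ hx₁ s hs)) (hw.comp (by fun_prop) (hmem x₁ hx₁))
  have hslice_int : Integrable (fun x₁ => (⨍ x₂ in p..q, u (x₁, x₂)) ^ 2)
      (volume.restrict (Ioo a₀ a₁)) := by
    simp_rw [havg]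
    refine Integrable.mono' ((hint (hu.pow 2)).integral_prod_left.const_mul (q - p)⁻¹)
      (((hint hu).integral_prod_left.aestronglyMeasurable.const_mul _).pow 2) ?_
    filter_upwards [ae_restrict_mem measurableSet_Ioo] with x₁ hx₁
    have hCS := sq_intervalIntegral_le hpq.le (hu.comp (by fun_prop) (hmem x₁ hx₁))
    simp only [Function.comp_def, hIoo] at hCS
    rw [Real.norm_eq_abs, abs_of_nonneg (sq_nonneg _)]
    calc ((q - p)⁻¹ * ∫ x₂ in Ioo p q, u (x₁, x₂)) ^ 2
        = (q - p)⁻¹ * ((q - p)⁻¹ * (∫ x₂ in Ioo p q, u (x₁, x₂)) ^ 2) := by ring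
      _ ≤ (q - p)⁻¹ * ∫ x₂ in Ioo p q, u (x₁, x₂) ^ 2 := by
        gcongr
        rwa [inv_mul_le_iff₀ hqp]
  have hw_int : Integrable (fun x₁ => ∫ x₂ in Ioo p q, w (x₁, x₂) ^ 2)
      (volume.restrict (Ioo a₀ a₁)) :=
    (hint (f := fun x => w x ^ 2) (hw.pow 2)).integral_prod_left
  calc ∫ x in Ioo a₀ a₁ ×ˢ Ioo p q, u x ^ 2
      = ∫ x₁ in Ioo a₀ a₁, ∫ x₂ in Ioo p q, u (x₁, x₂) ^ 2 := by
        rw [Measure.volume_eq_prod, setIntegral_prod _ (hintOn (f := fun x => u x ^ 2) (hu.pow 2))]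
    _ ≤ ∫ x₁ in Ioo a₀ a₁, (2 * (q - p) * (⨍ x₂ in p..q, u (x₁, x₂)) ^ 2
        + 2 * (q - p) ^ 2 * ∫ x₂ in Ioo p q, w (x₁, x₂) ^ 2) :=
        integral_mono_of_nonneg
          (Filter.Eventually.of_forall fun x₁ => integral_nonneg fun _ => sq_nonneg _)
          ((hslice_int.const_mul _).add (hw_int.const_mul _))
          ((ae_restrict_mem measurableSet_Ioo).mono hslice)
    _ = _ := by
        rw [integral_add (hslice_int.const_mul _) (hw_int.const_mul _), integral_const_mul,
          integral_const_mul, intervalIntegral.integral_of_le ha, integral_Ioc_eq_integral_Ioo,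
          Measure.volume_eq_prod (α := ℝ),
          setIntegral_prod _ (hintOn (f := fun x => w x ^ 2) (hw.pow 2))]

theorem setIntegral_comp_add_smul {E F : Type*} [NormedAddCommGroup E] [NormedSpace ℝ E]
    [MeasurableSpace E] [BorelSpace E] [FiniteDimensional ℝ E] (μ : Measure E)
    [μ.IsAddHaarMeasure] [NormedAddCommGroup F] [NormedSpace ℝ F] (f : E → F) (z : E) {R : ℝ}
    (hR : 0 < R) {s t : Set E} (hs : MeasurableSet s) (ht : MeasurableSet t)
    (hst : ∀ y, z + R • y ∈ t ↔ y ∈ s) :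
    ∫ y in s, f (z + R • y) ∂μ = (R ^ Module.finrank ℝ E)⁻¹ • ∫ x in t, f x ∂μ := by
  have hind : s.indicator (fun y => f (z + R • y)) = fun y => t.indicator f (z + R • y) := by
    ext y
    by_cases hy : y ∈ s <;> simp [hst, hy]
  rw [← integral_indicator hs, hind,
    Measure.integral_comp_smul_of_nonneg μ (fun w => t.indicator f (z + w)) R (hR := hR.le),
    integral_add_left_eq_self, integral_indicator ht]

theorem ContDiffOn.continuousOn_pd1 {u : ℝ × ℝ → ℝ} {U : Set (ℝ × ℝ)} (hu : ContDiffOn ℝ 1 u U)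
    (hU : IsOpen U) : ContinuousOn (pd1 u) U :=
  (hu.continuousOn_fderiv_of_isOpen hU le_rfl).clm_apply continuousOn_const

theorem ContDiffOn.continuousOn_pd2 {u : ℝ × ℝ → ℝ} {U : Set (ℝ × ℝ)} (hu : ContDiffOn ℝ 1 u U)
    (hU : IsOpen U) : ContinuousOn (pd2 u) U :=
  (hu.continuousOn_fderiv_of_isOpen hU le_rfl).clm_apply continuousOn_const

theorem ContDiffOn.hasDerivAt_pd2 {u : ℝ × ℝ → ℝ} {U : Set (ℝ × ℝ)} (hu : ContDiffOn ℝ 1 u U)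
    (hU : IsOpen U) {x : ℝ × ℝ} (hx : x ∈ U) :
    HasDerivAt (fun s => u (x.1, s)) (pd2 u x) x.2 :=
  ((hu.differentiableOn one_ne_zero).differentiableAt (hU.mem_nhds hx)).hasFDerivAt.comp_hasDerivAt
    x.2 ((hasDerivAt_const x.2 x.1).prodMk (hasDerivAt_id x.2))

theorem dot_grad_self (u : ℝ × ℝ → ℝ) (x : ℝ × ℝ) :
    dot (grad u x) (grad u x) = pd1 u x ^ 2 + pd2 u x ^ 2 := by
  simp only [dot, grad, sq]

theorem integrableOn_energy_of_C1Nhd {u : ℝ × ℝ → ℝ} {s : Set (ℝ × ℝ)} (hreg : C1Nhd u s)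
    (hs : Bornology.IsBounded s) :
    IntegrableOn (fun x => u x ^ 2 + dot (grad u x) (grad u x)) s := by
  obtain ⟨U, hU, hsU, hu⟩ := hreg
  simp_rw [dot_grad_self]
  have hcont : ContinuousOn (fun x => u x ^ 2 + (pd1 u x ^ 2 + pd2 u x ^ 2)) U :=
    (hu.continuousOn.pow 2).add
      (((hu.continuousOn_pd1 hU).pow 2).add ((hu.continuousOn_pd2 hU).pow 2))
  exact ((hcont.mono hsU).integrableOn_compact hs.isCompact_closure).mono_set subset_closure

theorem isBounded_Channels (a L α ε : ℝ) (hε : 0 < ε) :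
    Bornology.IsBounded (Channels a L α ε) := by
  refine ((Metric.isBounded_Icc 0 (a + α * ε ^ 3)).prod (Metric.isBounded_Icc 0 (L * ε))).subset
    (iUnion₂_subset fun k hk => prod_mono ?_ subset_rfl)
  rintro x ⟨hx₁, hx₂⟩
  have hk : (k : ℝ) * ε ≤ a :=
    (le_div_iff₀ hε).1 (Nat.lt_of_lt_floor (Finset.mem_range.1 hk)).le
  exact ⟨(by positivity : (0 : ℝ) ≤ k * ε).trans hx₁.le, by linarith⟩

theorem isBounded_OmegaEps (a b L V α ε : ℝ) (hε : 0 < ε) :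
    Bornology.IsBounded (OmegaEps a b L V α ε) :=
  (((Metric.isBounded_Ioo _ _).prod (Metric.isBounded_Ioo _ _)).union
    ((Metric.isBounded_Ioo _ _).prod (Metric.isBounded_Ioo _ _))).union
    (isBounded_Channels a L α ε hε)

theorem measurableSet_OmegaEps (a b L V α ε : ℝ) : MeasurableSet (OmegaEps a b L V α ε) :=
  ((measurableSet_Ioo.prod measurableSet_Ioo).union
    (measurableSet_Ioo.prod measurableSet_Ioo)).union
    ((Finset.range _).measurableSet_biUnion fun _ _ => measurableSet_Ioo.prod measurableSet_Icc)

theorem Strip_subset_OmegaEps (a b L V α ε : ℝ) : Strip a L V ε ⊆ OmegaEps a b L V α ε :=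
  subset_union_right.trans subset_union_left

theorem closure_Strip {a L V ε : ℝ} (ha : 0 < a) (hV : 0 < V) (hε : 0 < ε) :
    closure (Strip a L V ε) = Icc 0 a ×ˢ Icc (L * ε) ((L + V) * ε) := by
  rw [Strip, closure_prod_eq, closure_Ioo ha.ne, closure_Ioo (by nlinarith)]

/-- The cell `ε (k + Y_V)` of the strip `S_ε`. -/
def stripCell (L V ε : ℝ) (k : ℕ) : Set (ℝ × ℝ) :=
  Ioo (k * ε) ((k + 1) * ε) ×ˢ Ioo (L * ε) ((L + V) * ε)

theorem add_smul_mem_stripCell_iff {L V ε : ℝ} (hε : 0 < ε) (k : ℕ) (y : ℝ × ℝ) :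
    ((ε * k, 0) + ε • y ∈ stripCell L V ε k) ↔ y ∈ Yabove L V := by
  simp only [stripCell, Yabove, mem_prod, mem_Ioo, Prod.fst_add, Prod.snd_add, Prod.smul_fst,
    Prod.smul_snd, smul_eq_mul, zero_add]
  constructor <;> rintro ⟨⟨h₁, h₂⟩, h₃, h₄⟩ <;> refine ⟨⟨?_, ?_⟩, ?_, ?_⟩ <;> nlinarith

theorem pairwise_disjoint_stripCell {L V ε : ℝ} (hε : 0 ≤ ε) :
    Pairwise (Function.onFun Disjoint (stripCell L V ε)) := by
  refine (pairwise_disjoint_on _).2 fun k l hkl => disjoint_left.2 fun x hk hl => ?_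
  have hkl' : (k : ℝ) + 1 ≤ l := by exact_mod_cast hkl
  nlinarith [hk.1.2, hl.1.1]

open Classical in
theorem mem_Kset_bounds {a c d ε : ℝ} {k : ℕ} (hk : k ∈ Kset a c d ε) :
    0 ≤ (k : ℝ) * ε ∧ ((k : ℝ) + 1) * ε ≤ a := by
  obtain ⟨-, ⟨h₀, h₁⟩, -⟩ := Finset.mem_filter.1 hk
  exact ⟨h₀, by linarith⟩

theorem stripCell_subset_Strip {a c d L V ε : ℝ} {k : ℕ} (hk : k ∈ Kset a c d ε) :
    stripCell L V ε k ⊆ Strip a L V ε :=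
  prod_mono (Ioo_subset_Ioo (mem_Kset_bounds hk).1 (mem_Kset_bounds hk).2) subset_rfl

open Classical in
theorem le_card_Kset {a c d ε : ℝ} (hc : 0 ≤ c) (hd : d ≤ a) (hε : 0 < ε) :
    (d - c) / ε - 2 ≤ (Kset a c d ε).card := by
  set k₀ := ⌈c / ε⌉₊
  set k₁ := ⌊d / ε⌋₊
  have hsub : Finset.Ico k₀ k₁ ⊆ Kset a c d ε := by
    intro k hk
    obtain ⟨hk₀, hk₁⟩ := Finset.mem_Ico.1 hk
    have hc' : c ≤ k * ε := (div_le_iff₀ hε).1 (Nat.ceil_le.1 hk₀)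
    have hd' : (k + 1) * ε ≤ d := by
      have : ((k + 1 : ℕ) : ℝ) ≤ d / ε := (Nat.le_floor_iff' k.succ_ne_zero).1 hk₁
      push_cast at this
      exact (le_div_iff₀ hε).1 this
    refine Finset.mem_filter.2 ⟨Finset.mem_range_succ_iff.2 (Nat.le_floor ?_), ⟨?_, ?_⟩, ?_⟩
    · rw [le_div_iff₀ hε]; linarith
    · linarith
    · linarith
    · exact ⟨k * ε + ε / 2, ⟨by linarith, by linarith⟩, by linarith, by linarith⟩
  have hcard : k₁ ≤ (Kset a c d ε).card + k₀ := by
    have := Finset.card_le_card hsub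
    rw [Nat.card_Ico] at this
    omega
  have h₀ : (k₀ : ℝ) < c / ε + 1 := Nat.ceil_lt_add_one (div_nonneg hc hε.le)
  have h₁ : d / ε - 1 < (k₁ : ℝ) := Nat.sub_one_lt_floor _
  have : (k₁ : ℝ) ≤ (Kset a c d ε).card + k₀ := by exact_mod_cast hcard
  rw [sub_div]
  linarith

theorem sum_setIntegral_le_setIntegral {ι α : Type*} [MeasurableSpace α] {μ : Measure α}
    {f : α → ℝ} {s : Set α} {t : ι → Set α} {K : Finset ι} (hf : 0 ≤ f)
    (hfs : IntegrableOn f s μ) (ht : ∀ i ∈ K, MeasurableSet (t i))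
    (hdisj : (K : Set ι).PairwiseDisjoint t) (hts : ∀ i ∈ K, t i ⊆ s) :
    ∑ i ∈ K, ∫ x in t i, f x ∂μ ≤ ∫ x in s, f x ∂μ := by
  rw [← integral_biUnion_finset K ht hdisj fun i hi => hfs.mono_set (hts i hi)]
  exact setIntegral_mono_set hfs (Filter.Eventually.of_forall hf) (iUnion₂_subset hts).eventuallyLE

theorem integral_sq_Uav_le {a c d L V ε : ℝ} (hε : 0 < ε) {u : ℝ × ℝ → ℝ}
    (hu : ContinuousOn u (Icc 0 a ×ˢ Icc (L * ε) ((L + V) * ε))) :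
    ∫ y in Yabove L V, Uav a c d ε u y ^ 2 ≤
      (∫ x in Strip a L V ε, u x ^ 2) / ((Kset a c d ε).card * ε ^ 2) := by
  set K := Kset a c d ε
  have hshift : ∀ (k : ℕ) (y : ℝ × ℝ), u (ε * (k + y.1), ε * y.2) = u ((ε * k, 0) + ε • y) :=
    fun k y => congrArg u (Prod.ext (by simp only [Prod.fst_add, Prod.smul_fst, smul_eq_mul]; ring)
      (by simp only [Prod.snd_add, Prod.smul_snd, smul_eq_mul, zero_add]))
  have hint : ∀ k ∈ K, IntegrableOn (fun y => u ((ε * k, 0) + ε • y) ^ 2) (Yabove L V) := by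
    intro k hk
    obtain ⟨hk₀, hk₁⟩ := mem_Kset_bounds hk
    have hmaps : MapsTo (fun y : ℝ × ℝ => (ε * k, 0) + ε • y) (Icc 0 1 ×ˢ Icc L (L + V))
        (Icc 0 a ×ˢ Icc (L * ε) ((L + V) * ε)) := by
      rintro y ⟨⟨h₁, h₂⟩, h₃, h₄⟩
      simp only [mem_prod, mem_Icc, Prod.fst_add, Prod.snd_add, Prod.smul_fst, Prod.smul_snd,
        smul_eq_mul, zero_add]
      refine ⟨⟨?_, ?_⟩, ?_, ?_⟩ <;> nlinarith
    exact (((hu.comp (by fun_prop) hmaps).pow 2).integrableOn_compact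
      (isCompact_Icc.prod isCompact_Icc)).mono_set
        (prod_mono Ioo_subset_Icc_self Ioo_subset_Icc_self)
  have hscale : ∀ k ∈ K, ∫ y in Yabove L V, u ((ε * k, 0) + ε • y) ^ 2
      = (ε ^ 2)⁻¹ * ∫ x in stripCell L V ε k, u x ^ 2 := fun k _ => by
    have h := setIntegral_comp_add_smul volume (fun x => u x ^ 2) _ hε
      (measurableSet_Ioo.prod measurableSet_Ioo) (measurableSet_Ioo.prod measurableSet_Ioo)
      (add_smul_mem_stripCell_iff (L := L) (V := V) hε k)
    rwa [show Module.finrank ℝ (ℝ × ℝ) = 2 by simp, smul_eq_mul] at h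
  have hStrip : IntegrableOn (fun x => u x ^ 2) (Strip a L V ε) :=
    ((hu.pow 2).integrableOn_compact (isCompact_Icc.prod isCompact_Icc)).mono_set
      (prod_mono Ioo_subset_Icc_self Ioo_subset_Icc_self)
  calc ∫ y in Yabove L V, Uav a c d ε u y ^ 2
      ≤ ∫ y in Yabove L V, (∑ k ∈ K, u ((ε * k, 0) + ε • y) ^ 2) / K.card := by
        refine integral_mono_of_nonneg (Filter.Eventually.of_forall fun y => sq_nonneg _)
          ((integrable_finsetSum K hint).div_const _) (Filter.Eventually.of_forall fun y => ?_)
        simp only [Uav, one_div_mul_eq_div, hshift]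
        exact sum_div_card_sq_le_sum_sq_div_card
    _ = (∑ k ∈ K, ∫ x in stripCell L V ε k, u x ^ 2) / (K.card * ε ^ 2) := by
        rw [integral_div, integral_finsetSum K hint, Finset.sum_congr rfl hscale,
          ← Finset.mul_sum, div_mul_eq_div_div_swap, div_eq_mul_inv _ (ε ^ 2), mul_comm,
          mul_div_assoc]
    _ ≤ (∫ x in Strip a L V ε, u x ^ 2) / (K.card * ε ^ 2) := by
        gcongr
        exact sum_setIntegral_le_setIntegral (fun x => sq_nonneg _) hStrip
          (fun k _ => measurableSet_Ioo.prod measurableSet_Ioo)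
          ((pairwise_disjoint_stripCell hε.le).set_pairwise _) fun k hk => stripCell_subset_Strip hk

theorem vEps_eq_intervalAverage (L V ε : ℝ) (u : ℝ × ℝ → ℝ) (x₁ : ℝ) :
    vEps L V ε u x₁ = ⨍ x₂ in L * ε..(L + V) * ε, u (x₁, x₂) := by
  rw [vEps, interval_average_eq, smul_eq_mul, mul_comm ε L, mul_comm ε (L + V)]
  congr 1
  ring

theorem setIntegral_pd2_sq_le_energy {u : ℝ × ℝ → ℝ} {s t : Set (ℝ × ℝ)} (hst : s ⊆ t)
    (hE : IntegrableOn (fun x => u x ^ 2 + dot (grad u x) (grad u x)) t) :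
    ∫ x in s, pd2 u x ^ 2 ≤ ∫ x in t, (u x ^ 2 + dot (grad u x) (grad u x)) := by
  simp only [dot_grad_self] at hE ⊢
  calc ∫ x in s, pd2 u x ^ 2 ≤ ∫ x in s, (u x ^ 2 + (pd1 u x ^ 2 + pd2 u x ^ 2)) :=
        integral_mono_of_nonneg (Filter.Eventually.of_forall fun x => sq_nonneg _)
          (hE.mono_set hst) (Filter.Eventually.of_forall fun x => by
            nlinarith [sq_nonneg (u x), sq_nonneg (pd1 u x)])
    _ ≤ ∫ x in t, (u x ^ 2 + (pd1 u x ^ 2 + pd2 u x ^ 2)) :=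
        setIntegral_mono_set hE (Filter.Eventually.of_forall fun x => by positivity)
          hst.eventuallyLE

theorem setIntegral_sq_Strip_le {a L V ε M M' : ℝ} {u : ℝ × ℝ → ℝ} {U : Set (ℝ × ℝ)}
    (ha : 0 ≤ a) (hV : 0 < V) (hε : 0 < ε) (hU : IsOpen U) (hu : ContDiffOn ℝ 1 u U)
    (hbox : Icc 0 a ×ˢ Icc (L * ε) ((L + V) * ε) ⊆ U)
    (hgrad : ∫ x in Strip a L V ε, pd2 u x ^ 2 ≤ M)
    (hvL2 : ∫ x₁ in (0:ℝ)..a, vEps L V ε u x₁ ^ 2 ≤ M') :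
    ∫ x in Strip a L V ε, u x ^ 2 ≤ 2 * (V * ε) * M' + 2 * (V * ε) ^ 2 * M := by
  have h := setIntegral_sq_le_of_hasDerivAt_snd ha (by nlinarith) (hu.continuousOn.mono hbox)
    ((hu.continuousOn_pd2 hU).mono hbox) fun x hx => hu.hasDerivAt_pd2 hU (hbox hx)
  simp only [← vEps_eq_intervalAverage, show (L + V) * ε - L * ε = V * ε by ring] at h
  refine h.trans ?_
  gcongr
  exact hgrad

theorem sub_le_three_mul_card_Kset_mul {a c d ε : ℝ} (hc : 0 ≤ c) (hd : d ≤ a) (hε : 0 < ε)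
    (hK : (Kset a c d ε).Nonempty) :
    d - c ≤ 3 * ((Kset a c d ε).card * ε) := by
  have hcard := le_card_Kset hc hd hε
  have hK₁ : (1 : ℝ) ≤ (Kset a c d ε).card := Nat.one_le_cast.2 hK.card_pos
  rw [div_sub' hε.ne', div_le_iff₀ hε] at hcard
  nlinarith

theorem integral_sq_Uav_le_of_energy_le {a b L V α c d ε M M' : ℝ} {u : ℝ × ℝ → ℝ}
    (hV : 0 < V) (hc : 0 ≤ c) (hcd : c < d) (hd : d ≤ a) (hε : 0 < ε)
    (hreg : C1Nhd u (OmegaEps a b L V α ε))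
    (hbdd : ∫ x in OmegaEps a b L V α ε, (u x ^ 2 + dot (grad u x) (grad u x)) ≤ M)
    (hvL2 : ∫ x₁ in (0:ℝ)..a, vEps L V ε u x₁ ^ 2 ≤ M') :
    ∫ y in Yabove L V, Uav a c d ε u y ^ 2 ≤ 6 * V / (d - c) * M' + 2 * V ^ 2 * M := by
  have ha : 0 < a := by linarith
  have hE := integrableOn_energy_of_C1Nhd hreg (isBounded_OmegaEps a b L V α ε hε)
  have hM : 0 ≤ M :=
    (setIntegral_nonneg (measurableSet_OmegaEps a b L V α ε) fun x _ => by
      rw [dot_grad_self]; positivity).trans hbdd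
  have hM' : 0 ≤ M' := (intervalIntegral.integral_nonneg ha.le fun _ _ => sq_nonneg _).trans hvL2
  obtain ⟨U, hU, hΩU, hu⟩ := hreg
  have hbox : Icc 0 a ×ˢ Icc (L * ε) ((L + V) * ε) ⊆ U :=
    closure_Strip ha hV hε ▸ (closure_mono (Strip_subset_OmegaEps a b L V α ε)).trans hΩU
  have hstrip := setIntegral_sq_Strip_le ha.le hV hε hU hu hbox
    ((setIntegral_pd2_sq_le_energy (Strip_subset_OmegaEps a b L V α ε) hE).trans hbdd) hvL2
  have hcell := integral_sq_Uav_le (c := c) (d := d) hε (hu.continuousOn.mono hbox)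
  rcases (Kset a c d ε).eq_empty_or_nonempty with hK | hK
  · -- `Uav` vanishes for `K_ε = ∅` because `1 / 0 = 0`; so does the bound in `hcell`.
    rw [hK, Finset.card_empty, Nat.cast_zero, zero_mul, div_zero] at hcell
    exact hcell.trans (by positivity)
  set κ : ℝ := ((Kset a c d ε).card : ℝ)
  have hκ₁ : 1 ≤ κ := Nat.one_le_cast.2 hK.card_pos
  have hκε := sub_le_three_mul_card_Kset_mul hc hd hε hK
  calc ∫ y in Yabove L V, Uav a c d ε u y ^ 2
      ≤ (2 * (V * ε) * M' + 2 * (V * ε) ^ 2 * M) / (κ * ε ^ 2) := by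
        refine hcell.trans ?_
        gcongr
    _ = 2 * V / (κ * ε) * M' + 2 * V ^ 2 / κ * M := by
        field_simp
    _ ≤ 6 * V / (d - c) * M' + 2 * V ^ 2 * M := by
        have hM'coef : 2 * V / (κ * ε) ≤ 6 * V / (d - c) := by
          rw [div_le_div_iff₀ (by positivity) (by linarith)]
          nlinarith
        have hMcoef : 2 * V ^ 2 / κ ≤ 2 * V ^ 2 := div_le_self (by positivity) hκ₁
        gcongr

theorem cell_average_L2_bound_strip_general
    (a b L V α : ℝ) (hV : 0 < V)
    (c d : ℝ) (hc : 0 ≤ c) (hcd : c < d) (hd : d ≤ a)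
    (ε : ℕ → ℝ) (hadm : ∀ n, Admissible a (ε n))
    (uu : ℕ → ℝ × ℝ → ℝ)
    (hreg : ∀ n, C1Nhd (uu n) (OmegaEps a b L V α (ε n)))
    (M : ℝ)
    (hbdd : ∀ n, ∫ x in OmegaEps a b L V α (ε n),
      ((uu n x) ^ 2 + dot (grad (uu n) x) (grad (uu n) x)) ≤ M)
    (M' : ℝ)
    (hvL2 : ∀ n, ∫ x₁ in (0:ℝ)..a, (vEps L V (ε n) (uu n) x₁) ^ 2 ≤ M') :
    ∃ C : ℝ, ∀ n, ∫ y in Yabove L V, (Uav a c d (ε n) (uu n) y) ^ 2 ≤ C :=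
  ⟨6 * V / (d - c) * M' + 2 * V ^ 2 * M, fun n =>
    integral_sq_Uav_le_of_energy_le hV hc hcd hd (hadm n).1 (hreg n) (hbdd n) (hvL2 n)⟩

/-- **L² bound for the cell averages in the resonator strip.** -/
theorem cell_average_L2_bound_strip
    (a b L V α : ℝ) (ha : 0 < a) (hb : 0 < b) (hL : 0 < L) (hV : 0 < V) (hα : 0 < α)
    (c d : ℝ) (hc : 0 ≤ c) (hcd : c < d) (hd : d ≤ a)
    (ε : ℕ → ℝ) (hadm : ∀ n, Admissible a (ε n)) (hεlim : Tendsto ε atTop (𝓝 0))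
    (uu : ℕ → ℝ × ℝ → ℝ)
    (hreg : ∀ n, C1Nhd (uu n) (OmegaEps a b L V α (ε n)))
    (M : ℝ)
    (hbdd : ∀ n, ∫ x in OmegaEps a b L V α (ε n),
      ((uu n x) ^ 2 + dot (grad (uu n) x) (grad (uu n) x)) ≤ M)
    (M' : ℝ)
    (hvL2 : ∀ n, ∫ x₁ in (0:ℝ)..a, (vEps L V (ε n) (uu n) x₁) ^ 2 ≤ M') :
    ∃ C : ℝ, ∀ n, ∫ y in Yabove L V, (Uav a c d (ε n) (uu n) y) ^ 2 ≤ C :=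
  cell_average_L2_bound_strip_general a b L V α hV c d hc hcd hd ε hadm uu hreg M hbdd M' hvL2
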